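/- arXiv:1804.07155 — 2 statements merged into one kernel-verified Lean document; each statement's English description precedes it below -/
import Mathlib

section
/- Let X be a finite set of points in Euclidean space ℝ^n, let x_i, x_j ∈ X be distinct, and let X' = X \ {x_i}. Let B = {x ∈ ℝ^n : dist(x, x_i) = dist(x, x_j) and dist(x, x_i) ≤ dist(x, x_k) for all x_k ∈ X \ {x_i, x_j}} be the common border of the Voronoi cells of x_i and x_j. If B has strictly positive (n−1)-dimensional Hausdorff measure, then the Voronoi cell of x_j strictly expands when x_i is removed: V(x_j, X) ⊊ V(x_j, X'). -/
open scoped Classical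

open MeasureTheory Metric

/-!
Points equidistant from three distinct points `a, b, c` exist only if `a, b, c` are
affinely independent, and then they form an affine subspace orthogonal to the plane of
`a, b, c`, of codimension two and hence `μH[n-1]`-null. So a border of positive
`μH[n-1]`-measure contains a point `b` strictly closer to `xi` and `xj` than to every other
point of `X`. Moving `b` slightly towards `xi` keeps it strictly closer to `xj` than to
every third point, while it becomes strictly closer to `xi` than to `xj`: the moved point
lies in `V(xj, X \ {xi})` but not in `V(xj, X)`.
-/

def voronoiCell {n : ℕ} (S : Finset (EuclideanSpace ℝ (Fin n)))
    (p : EuclideanSpace ℝ (Fin n)) : Set (EuclideanSpace ℝ (Fin n)) :=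
  {x | ∀ q ∈ S, dist x p ≤ dist x q}

open Module Filter Topology AffineMap EuclideanGeometry

section

variable {E : Type*} [NormedAddCommGroup E]

theorem AffineSubspace.hausdorffMeasure_eq_zero_of_finrank_lt [NormedSpace ℝ E]
    [FiniteDimensional ℝ E] [MeasurableSpace E] [BorelSpace E] (s : AffineSubspace ℝ E)
    {d : ℝ} (hd : finrank ℝ s.direction < d) : μH[d] (s : Set E) = 0 := by
  rcases (s : Set E).eq_empty_or_nonempty with hs | hs
  · simp [hs]
  lift d to NNReal using (Nat.cast_nonneg _).trans hd.le
  apply hausdorffMeasure_of_dimH_lt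
  rw [Real.Convex.dimH_eq_finrank_vectorSpan s.convex hs]
  exact_mod_cast hd

variable [InnerProductSpace ℝ E]

theorem isOrtho_vectorSpan_of_dist_eq {s t : Set E}
    (h : ∀ x ∈ s, ∀ p ∈ t, ∀ q ∈ t, dist p x = dist q x) :
    vectorSpan ℝ s ⟂ vectorSpan ℝ t := by
  rw [vectorSpan_def, vectorSpan_def, Submodule.isOrtho_span]
  rintro _ ⟨x, hx, y, hy, rfl⟩ _ ⟨p, hp, q, hq, rfl⟩
  exact inner_vsub_vsub_of_dist_eq_of_dist_eq (h y hy q hq p hp) (h x hx q hq p hp)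

theorem hausdorffMeasure_setOf_dist_eq_dist_eq_zero [FiniteDimensional ℝ E] [MeasurableSpace E]
    [BorelSpace E] {a b c : E} (hab : a ≠ b) (hac : a ≠ c) (hbc : b ≠ c) :
    μH[finrank ℝ E - 1] {x | dist x a = dist x b ∧ dist x b = dist x c} = 0 := by
  set s := AffineSubspace.perpBisector a b ⊓ AffineSubspace.perpBisector b c
  have hs : {x | dist x a = dist x b ∧ dist x b = dist x c} = (s : Set E) := by
    ext x
    simp [s, AffineSubspace.mem_inf_iff, AffineSubspace.mem_perpBisector_iff_dist_eq]
  rw [hs]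
  rcases (s : Set E).eq_empty_or_nonempty with hempty | ⟨o, ho⟩
  · simp [hempty]
  have hequi : ∀ x ∈ (s : Set E), ∀ p ∈ ({a, b, c} : Set E), ∀ q ∈ ({a, b, c} : Set E),
      dist p x = dist q x := by
    rintro x hx p hp q hq
    obtain ⟨hxab, hxbc⟩ : dist x a = dist x b ∧ dist x b = dist x c := by rwa [← hs] at hx
    rw [dist_comm p, dist_comm q]
    simp only [Set.mem_insert_iff, Set.mem_singleton_iff] at hp hq
    rcases hp with rfl | rfl | rfl <;> rcases hq with rfl | rfl | rfl <;> linarith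
  have hind : AffineIndependent ℝ ![a, b, c] :=
    Cospherical.affineIndependent_of_ne ⟨o, dist a o, fun p hp => hequi o ho p hp a (by simp)⟩
      hab hac hbc
  have hspan : finrank ℝ (vectorSpan ℝ ({a, b, c} : Set E)) = 2 := by
    rw [← hind.finrank_vectorSpan (n := 2) rfl, Matrix.range_cons, Matrix.range_cons_cons_empty,
      Set.singleton_union]
  have hle := Submodule.finrank_mono
    (Submodule.isOrtho_iff_le.1 (isOrtho_vectorSpan_of_dist_eq hequi))
  have hadd := Submodule.finrank_add_finrank_orthogonal (vectorSpan ℝ ({a, b, c} : Set E))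
  apply s.hausdorffMeasure_eq_zero_of_finrank_lt
  have : finrank ℝ s.direction + 2 ≤ finrank ℝ E := by
    rw [AffineSubspace.direction]; omega
  have : (finrank ℝ s.direction : ℝ) + 2 ≤ finrank ℝ E := by exact_mod_cast this
  linarith

theorem dist_lineMap_lt_of_dist_eq {a b c : E} (hac : a ≠ c) (hb : dist b a = dist b c) {t : ℝ}
    (ht : 0 < t) : dist (lineMap b a t) a < dist (lineMap b a t) c := by
  have hxa : lineMap b a t - a = (1 - t) • (b - a) := by rw [lineMap_apply_module]; module
  have hxc : lineMap b a t - c = (1 - t) • (b - a) + (a - c) := by rw [← hxa]; abel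
  have hbc : b - c = (b - a) + (a - c) := by abel
  rw [dist_eq_norm, dist_eq_norm] at hb ⊢
  have hb2 := congrArg (· ^ 2) hb
  simp only [hbc, norm_add_sq_real] at hb2
  -- `‖x - c‖ ^ 2 - ‖x - a‖ ^ 2` is affine in `x`, vanishes at `b` and equals `‖a - c‖ ^ 2` at `a`.
  have hsq : ‖lineMap b a t - c‖ ^ 2 = ‖lineMap b a t - a‖ ^ 2 + t * ‖a - c‖ ^ 2 := by
    rw [hxa, hxc, norm_add_sq_real, norm_smul, real_inner_smul_left, mul_pow]
    linear_combination (t - 1) * hb2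
  have hac' : 0 < ‖a - c‖ := norm_pos_iff.2 (sub_ne_zero.2 hac)
  refine lt_of_pow_lt_pow_left₀ 2 (norm_nonneg _) ?_
  rw [hsq]
  exact lt_add_of_pos_right _ (by positivity)

theorem exists_dist_eq_forall_dist_lt_of_hausdorffMeasure_pos [FiniteDimensional ℝ E]
    [MeasurableSpace E] [BorelSpace E] (X : Finset E) {a c : E} (hac : a ≠ c)
    (hpos : 0 < μH[finrank ℝ E - 1]
      {x | dist x a = dist x c ∧ ∀ q ∈ X, q ≠ a → q ≠ c → dist x a ≤ dist x q}) :
    ∃ b, dist b a = dist b c ∧ ∀ q ∈ X, q ≠ a → q ≠ c → dist b c < dist b q := by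
  by_contra! h
  refine hpos.ne' (measure_mono_null (t := ⋃ q ∈ (X.erase a).erase c,
    {x | dist x a = dist x c ∧ dist x c = dist x q}) ?_ ?_)
  · rintro x ⟨hxac, hle⟩
    obtain ⟨q, hqX, hqa, hqc, hge⟩ := h x hxac
    refine Set.mem_biUnion (by simp [hqX, hqa, hqc]) ⟨hxac, le_antisymm ?_ hge⟩
    linarith [hle q hqX hqa hqc]
  · refine (measure_biUnion_null_iff ((X.erase a).erase c).countable_toSet).2 fun q hq => ?_
    obtain ⟨hqc, hqa, -⟩ := Finset.mem_erase.1 hq |>.imp_right Finset.mem_erase.1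
    exact hausdorffMeasure_setOf_dist_eq_dist_eq_zero hac hqa.symm hqc.symm

end

section

variable {n : ℕ}

theorem voronoiCell_anti {S T : Finset (EuclideanSpace ℝ (Fin n))} (h : S ⊆ T)
    (p : EuclideanSpace ℝ (Fin n)) : voronoiCell T p ⊆ voronoiCell S p :=
  fun _ hx q hq => hx q (h hq)

theorem eventually_mem_voronoiCell_erase {X : Finset (EuclideanSpace ℝ (Fin n))}
    {xi xj b : EuclideanSpace ℝ (Fin n)} (hb : ∀ q ∈ X, q ≠ xi → q ≠ xj → dist b xj < dist b q) :
    ∀ᶠ x in 𝓝 b, x ∈ voronoiCell (X.erase xi) xj := by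
  have hnear : ∀ᶠ x in 𝓝 b, ∀ q ∈ X, q ≠ xi → q ≠ xj → dist x xj < dist x q :=
    (eventually_all_finset X).2 fun q hq => eventually_imp_distrib_left.2 fun hqi =>
      eventually_imp_distrib_left.2 fun hqj =>
        ContinuousAt.eventually_lt (by fun_prop) (by fun_prop) (hb q hq hqi hqj)
  filter_upwards [hnear] with x hx q hq
  obtain ⟨hqi, hqX⟩ := Finset.mem_erase.1 hq
  rcases eq_or_ne q xj with rfl | hqj
  exacts [le_rfl, (hx q hqX hqi hqj).le]

end

theorem voronoi_cell_expansion_general {n : ℕ} (X : Finset (EuclideanSpace ℝ (Fin n)))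
    (xi xj : EuclideanSpace ℝ (Fin n)) (hxi : xi ∈ X) (hij : xi ≠ xj)
    (B : Set (EuclideanSpace ℝ (Fin n)))
    (hB : B = {x | dist x xi = dist x xj ∧
      ∀ xk ∈ X, xk ≠ xi → xk ≠ xj → dist x xi ≤ dist x xk})
    (hpos : 0 < μH[(n : ℝ) - 1] B) :
    voronoiCell X xj ⊂ voronoiCell (X.erase xi) xj := by
  refine (Set.ssubset_iff_of_subset (voronoiCell_anti (X.erase_subset xi) xj)).2 ?_
  have hdim : (n : ℝ) - 1 = finrank ℝ (EuclideanSpace ℝ (Fin n)) - 1 := by simp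
  rw [hB, hdim] at hpos
  obtain ⟨b, hb_eq, hb_lt⟩ := exists_dist_eq_forall_dist_lt_of_hausdorffMeasure_pos X hij hpos
  have hlineMap : Tendsto (fun t : ℝ => lineMap b xi t) (𝓝[>] 0) (𝓝 b) :=
    (lineMap_continuous.tendsto' 0 b (by simp)).mono_left nhdsWithin_le_nhds
  obtain ⟨t, ht_mem, ht_pos⟩ :=
    ((hlineMap.eventually (eventually_mem_voronoiCell_erase hb_lt)).and self_mem_nhdsWithin).exists
  exact ⟨_, ht_mem, fun h => (h xi hxi).not_gt (dist_lineMap_lt_of_dist_eq hij hb_eq ht_pos)⟩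

/-- Cell expansion: if the common border `B` of the Voronoi cells of `xi` and
`xj` has strictly positive `(n-1)`-dimensional Hausdorff measure, then the Voronoi cell of
`xj` strictly expands when `xi` is removed from the reference set:
`V(xj, X) ⊊ V(xj, X \ {xi})`. -/
theorem voronoi_cell_expansion {n : ℕ} (X : Finset (EuclideanSpace ℝ (Fin n)))
    (xi xj : EuclideanSpace ℝ (Fin n)) (hxi : xi ∈ X) (hxj : xj ∈ X) (hij : xi ≠ xj)
    (B : Set (EuclideanSpace ℝ (Fin n)))
    (hB : B = {x | dist x xi = dist x xj ∧
      ∀ xk ∈ X, xk ≠ xi → xk ≠ xj → dist x xi ≤ dist x xk})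
    (hpos : 0 < μH[(n : ℝ) - 1] B) :
    voronoiCell X xj ⊂ voronoiCell (X.erase xi) xj :=
  voronoi_cell_expansion_general X xi xj hxi hij B hB hpos
end

section
/- For the one-dimensional uniform example, the Balanced Bayes boundary at the intersection of the two densities (b = 3) is strictly suboptimal with respect to the geometric mean: TPR(3)·TNR(3) < TPR(5)·TNR(5), i.e. the squared geometric mean 1/3 at b = 3 is strictly less than the squared geometric mean 25/63 at b = 5. -/
open MeasureTheory

/-- Class-conditional density of the positive class: uniform on `[0, 9]`. -/
noncomputable def pPlus (x : ℝ) : ℝ := if x ∈ Set.Icc (0 : ℝ) 9 then 1 / 9 else 0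

/-- Class-conditional density of the negative class: uniform on `[3, 10]`. -/
noncomputable def pMinus (x : ℝ) : ℝ := if x ∈ Set.Icc (3 : ℝ) 10 then 1 / 7 else 0

/-- True positive rate of the threshold classifier labelling `x` positive iff `x < b`. -/
noncomputable def TPR (b : ℝ) : ℝ := ∫ x in Set.Iio b, pPlus x

/-- True negative rate of the threshold classifier labelling `x` positive iff `x < b`. -/
noncomputable def TNR (b : ℝ) : ℝ := ∫ x in Set.Ici b, pMinus x

section UniformDensity

open Set

variable {a b d : ℝ}

theorem setIntegral_Iio_indicator_Icc_const (c : ℝ) (hab : a ≤ b) (hbd : b ≤ d) :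
    ∫ x in Iio b, (Icc a d).indicator (fun _ => c) x = c * (b - a) := by
  have hset : Iio b ∩ Icc a d = Ico a b := by
    ext x
    simp only [mem_inter_iff, mem_Iio, mem_Icc, mem_Ico]
    constructor
    · rintro ⟨hxb, hax, -⟩
      exact ⟨hax, hxb⟩
    · rintro ⟨hax, hxb⟩
      exact ⟨hxb, hax, by linarith⟩
  rw [setIntegral_indicator measurableSet_Icc, hset, setIntegral_const,
    Real.volume_real_Ico_of_le hab, smul_eq_mul, mul_comm]

theorem setIntegral_Ici_indicator_Icc_const (c : ℝ) (hab : a ≤ b) (hbd : b ≤ d) :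
    ∫ x in Ici b, (Icc a d).indicator (fun _ => c) x = c * (d - b) := by
  have hset : Ici b ∩ Icc a d = Icc b d := by
    ext x
    simp only [mem_inter_iff, mem_Ici, mem_Icc]
    constructor
    · rintro ⟨hbx, -, hxd⟩
      exact ⟨hbx, hxd⟩
    · rintro ⟨hbx, hxd⟩
      exact ⟨hbx, by linarith, hxd⟩
  rw [setIntegral_indicator measurableSet_Icc, hset, setIntegral_const,
    Real.volume_real_Icc_of_le hbd, smul_eq_mul, mul_comm]

end UniformDensity

theorem pPlus_eq_indicator : pPlus = (Set.Icc 0 9).indicator fun _ => 1 / 9 := by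
  funext x
  simp only [pPlus, Set.indicator_apply]

theorem pMinus_eq_indicator : pMinus = (Set.Icc 3 10).indicator fun _ => 1 / 7 := by
  funext x
  simp only [pMinus, Set.indicator_apply]

theorem TPR_eq {b : ℝ} (h0 : 0 ≤ b) (h9 : b ≤ 9) : TPR b = b / 9 := by
  rw [TPR, pPlus_eq_indicator, setIntegral_Iio_indicator_Icc_const _ h0 h9]
  ring

theorem TNR_eq {b : ℝ} (h3 : 3 ≤ b) (h10 : b ≤ 10) : TNR b = (10 - b) / 7 := by
  rw [TNR, pMinus_eq_indicator, setIntegral_Ici_indicator_Icc_const _ h3 h10]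
  ring

/-- the Balanced Bayes boundary `b = 3` (the intersection of the densities)
is strictly suboptimal with respect to the geometric mean: the squared geometric mean
`1/3` at `b = 3` is strictly less than the squared geometric mean `25/63` at `b = 5`. -/
theorem balancedBayes_suboptimal :
    TPR 3 * TNR 3 < TPR 5 * TNR 5 ∧ TPR 3 * TNR 3 = 1 / 3 ∧ TPR 5 * TNR 5 = 25 / 63 := by
  rw [TPR_eq (by norm_num) (by norm_num), TNR_eq le_rfl (by norm_num),
    TPR_eq (by norm_num) (by norm_num), TNR_eq (by norm_num) (by norm_num)]
  norm_num
end
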